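/- Let g_1, …, g_n ∈ F_{q^m} be linearly independent over F_q and r_1, …, r_n ∈ F_{q^m}. Let Π(X) = ∏_{g ∈ span_{F_q}(g_1,…,g_n)} (X − g) and let Λ be the q-Lagrange polynomial with Λ(g_i) = r_i for all i. Then for q-linearized polynomials f and h over F_{q^m}, the following are equivalent: (1) f(g_i) + h(r_i) = 0 for all i = 1, …, n; (2) there exists a q-linearized polynomial a over F_{q^m} such that f(X) = a(Π(X)) − h(Λ(X)). -/

import Mathlib

/-!
Put `G = f + h ∘ Λ` and `U = span(g₁, …, gₙ)`. Since `x ↦ x ^ q` is an `F`-algebra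
endomorphism of every commutative `F`-algebra (here `L` and `L[X]`), a `q`-linearized
polynomial induces an `F`-linear map, and `q`-linearized polynomials are closed under
composition. So (1) says that `G` vanishes on `U`, i.e. `Π_U ∣ G`. The annihilator `Π_U` is
itself `q`-linearized: adjoining `t ∉ W` to `W` gives
`Π_{W + F t} = ∏_{c ∈ F} (Π_W - c Π_W(t)) = (X ^ q - Π_W(t) ^ (q - 1) X) ∘ Π_W`.
Finally a monic `q`-linearized divisor `P` of a `q`-linearized `G` is a right symbolic factor:
subtracting `lc(G) P ^ (q ^ e)` lowers the degree of `G`, so `G = a ∘ P`. Conversely `a ∘ Π_U`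
vanishes on `U` because `a(0) = 0`.
-/

open Polynomial

/-- `f` is a `q`-linearized polynomial: every monomial with nonzero coefficient
has exponent a power of `q`, i.e. `f = Σ aᵢ X^(q^i)`. -/
def IsqLinearized (q : ℕ) {L : Type*} [Field L] (f : L[X]) : Prop :=
  ∀ i : ℕ, f.coeff i ≠ 0 → ∃ j : ℕ, i = q ^ j

namespace IsqLinearized

variable {q : ℕ} {L : Type*} [Field L] {f g P G : L[X]}

theorem C_mul_X_pow (c : L) (j : ℕ) : IsqLinearized q (C c * X ^ q ^ j) := fun i hi => by
  rw [coeff_C_mul_X_pow] at hi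
  exact ⟨j, by_contra fun h => hi (if_neg h)⟩

theorem X_pow (j : ℕ) : IsqLinearized q (X ^ q ^ j : L[X]) := by
  simpa using C_mul_X_pow (q := q) (1 : L) j

theorem C_mul (c : L) (hf : IsqLinearized q f) : IsqLinearized q (C c * f) := fun i hi => by
  rw [coeff_C_mul] at hi
  exact hf i (right_ne_zero_of_mul hi)

theorem zero : IsqLinearized q (0 : L[X]) := fun i hi => absurd (coeff_zero i) hi

theorem add (hf : IsqLinearized q f) (hg : IsqLinearized q g) : IsqLinearized q (f + g) :=
  fun i hi => by
    rw [coeff_add] at hi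
    by_cases hfi : f.coeff i = 0
    · exact hg i (by simpa [hfi] using hi)
    · exact hf i hfi

theorem sub (hf : IsqLinearized q f) (hg : IsqLinearized q g) : IsqLinearized q (f - g) :=
  fun i hi => by
    rw [coeff_sub] at hi
    by_cases hfi : f.coeff i = 0
    · exact hg i (by simpa [hfi] using hi)
    · exact hf i hfi

@[elab_as_elim]
theorem induction_on {motive : L[X] → Prop} (hf : IsqLinearized q f) (zero : motive 0)
    (add : ∀ f g, motive f → motive g → motive (f + g))
    (C_mul_X_pow : ∀ c j, motive (C c * X ^ q ^ j)) : motive f := by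
  rw [f.as_sum_support_C_mul_X_pow]
  refine Finset.sum_induction _ motive add zero fun i hi => ?_
  obtain ⟨j, rfl⟩ := hf i (mem_support_iff.1 hi)
  exact C_mul_X_pow _ j

theorem eval_zero (hq : q ≠ 0) (hf : IsqLinearized q f) : f.eval 0 = 0 := by
  rw [← coeff_zero_eq_eval_zero]
  by_contra h
  obtain ⟨j, hj⟩ := hf 0 h
  exact pow_ne_zero j hq hj.symm

theorem natDegree_eq_pow (hf : IsqLinearized q f) (hf0 : f ≠ 0) : ∃ j, f.natDegree = q ^ j :=
  hf _ (leadingCoeff_ne_zero.2 hf0)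

theorem exists_degree_sub_C_mul_X_pow_comp_lt (hq : 1 < q) (hP : IsqLinearized q P)
    (hPm : P.Monic) (hG : IsqLinearized q G) (hG0 : G ≠ 0) (hPG : P ∣ G) :
    ∃ e, (G - (C G.leadingCoeff * X ^ q ^ e).comp P).degree < G.degree := by
  obtain ⟨ν, hν⟩ := hP.natDegree_eq_pow hPm.ne_zero
  obtain ⟨N, hN⟩ := hG.natDegree_eq_pow hG0
  have hνN : ν ≤ N := (Nat.pow_le_pow_iff_right hq).1
    (hν ▸ hN ▸ natDegree_le_of_dvd hPG hG0)
  have hlc : G.leadingCoeff ≠ 0 := leadingCoeff_ne_zero.2 hG0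
  refine ⟨N - ν, degree_sub_lt_left ?_ hG0 ?_⟩ <;>
    rw [mul_comp, C_comp, X_pow_comp]
  · rw [degree_C_mul hlc, degree_pow, degree_eq_natDegree hG0, degree_eq_natDegree hPm.ne_zero,
      hN, hν, nsmul_eq_mul]
    norm_cast
    rw [← pow_add, Nat.sub_add_cancel hνN]
  · rw [leadingCoeff_mul, leadingCoeff_C, (hPm.pow _).leadingCoeff, mul_one]

end IsqLinearized

namespace FiniteField

variable {F R : Type*} [Field F] [Fintype F] [CommRing R] [Algebra F R]

theorem frobeniusAlgHom_pow_apply (j : ℕ) (x : R) :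
    (frobeniusAlgHom F R ^ j) x = x ^ Fintype.card F ^ j := by
  rw [AlgHom.coe_pow, coe_frobeniusAlgHom, pow_iterate]

theorem add_pow_card_pow (x y : R) (j : ℕ) :
    (x + y) ^ Fintype.card F ^ j = x ^ Fintype.card F ^ j + y ^ Fintype.card F ^ j := by
  simp only [← frobeniusAlgHom_pow_apply (F := F), map_add]

theorem sub_pow_card_pow (x y : R) (j : ℕ) :
    (x - y) ^ Fintype.card F ^ j = x ^ Fintype.card F ^ j - y ^ Fintype.card F ^ j := by
  simp only [← frobeniusAlgHom_pow_apply (F := F), map_sub]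

theorem smul_pow_card_pow (c : F) (x : R) (j : ℕ) :
    (c • x) ^ Fintype.card F ^ j = c • x ^ Fintype.card F ^ j := by
  simp only [← frobeniusAlgHom_pow_apply (F := F), map_smul]

theorem prod_X_sub_C_eq_X_pow_card_sub_X :
    ∏ c : F, (X - C c) = X ^ Fintype.card F - X := by
  have hmonic : (X ^ Fintype.card F - X : F[X]).Monic :=
    monic_X_pow_sub (by rw [degree_X]; exact_mod_cast Fintype.one_lt_card)
  have h := prod_multiset_X_sub_C_of_monic_of_roots_card_eq hmonic (by
    rw [roots_X_pow_card_sub_X, X_pow_card_sub_X_natDegree_eq F Fintype.one_lt_card]; rfl)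
  rwa [roots_X_pow_card_sub_X] at h

end FiniteField

open FiniteField

namespace IsqLinearized

variable {F L : Type*} [Field F] [Fintype F] [Field L] [Algebra F L] {f g P G : L[X]}

theorem eval_add (hf : IsqLinearized (Fintype.card F) f) (x y : L) :
    f.eval (x + y) = f.eval x + f.eval y := by
  refine hf.induction_on ?_ (fun f g hf hg => ?_) fun c j => ?_
  · simp
  · simp only [Polynomial.eval_add, hf, hg]; ring
  · simp only [eval_mul, eval_C, eval_pow, eval_X, add_pow_card_pow, mul_add]

theorem eval_smul (hf : IsqLinearized (Fintype.card F) f) (c : F) (x : L) :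
    f.eval (c • x) = c • f.eval x := by
  refine hf.induction_on ?_ (fun f g hf hg => ?_) fun a j => ?_
  · simp
  · simp only [Polynomial.eval_add, hf, hg, smul_add]
  · simp only [eval_mul, eval_C, eval_pow, eval_X, smul_pow_card_pow, mul_smul_comm]

def toLinearMap (hf : IsqLinearized (Fintype.card F) f) : L →ₗ[F] L where
  toFun x := f.eval x
  map_add' := hf.eval_add
  map_smul' := hf.eval_smul

theorem comp_X_sub_C (hf : IsqLinearized (Fintype.card F) f) (a : L) :
    f.comp (X - C a) = f - C (f.eval a) := by
  refine hf.induction_on ?_ (fun f g hf hg => ?_) fun c j => ?_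
  · simp
  · simp only [add_comp, hf, hg, Polynomial.eval_add, C_add]; ring
  · simp only [mul_comp, C_comp, X_pow_comp, sub_pow_card_pow (F := F), eval_mul, eval_C,
      eval_pow, eval_X, Polynomial.C_mul, C_pow]
    ring

theorem pow_card_pow (hf : IsqLinearized (Fintype.card F) f) (j : ℕ) :
    IsqLinearized (Fintype.card F) (f ^ Fintype.card F ^ j) := by
  refine hf.induction_on ?_ (fun f g hf hg => ?_) fun c i => ?_
  · simpa [zero_pow (pow_ne_zero j Fintype.card_ne_zero)] using zero
  · rw [add_pow_card_pow]; exact hf.add hg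
  · rw [mul_pow, ← C_pow, ← pow_mul, ← pow_add]
    exact C_mul_X_pow _ _

theorem comp (hf : IsqLinearized (Fintype.card F) f) (hg : IsqLinearized (Fintype.card F) g) :
    IsqLinearized (Fintype.card F) (f.comp g) := by
  refine hf.induction_on ?_ (fun f f' hf hf' => ?_) fun c j => ?_
  · simpa using zero
  · rw [add_comp]; exact hf.add hf'
  · rw [mul_comp, C_comp, X_pow_comp]
    exact (hg.pow_card_pow j).C_mul c

theorem exists_comp_eq_of_dvd (hP : IsqLinearized (Fintype.card F) P) (hPm : P.Monic)
    (hG : IsqLinearized (Fintype.card F) G) (hPG : P ∣ G) :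
    ∃ a, IsqLinearized (Fintype.card F) a ∧ G = a.comp P := by
  induction G using degree_lt_wf.induction with
  | _ G ih =>
  rcases eq_or_ne G 0 with rfl | hG0
  · exact ⟨0, zero, by simp⟩
  obtain ⟨e, hlt⟩ := exists_degree_sub_C_mul_X_pow_comp_lt Fintype.one_lt_card hP hPm hG hG0 hPG
  set M := C G.leadingCoeff * X ^ Fintype.card F ^ e
  have hM : IsqLinearized (Fintype.card F) M := C_mul_X_pow _ _
  have hPM : P ∣ M.comp P := by
    rw [mul_comp, C_comp, X_pow_comp]
    exact dvd_mul_of_dvd_right (dvd_pow_self P (pow_ne_zero _ Fintype.card_ne_zero)) _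
  obtain ⟨a, ha, hGa⟩ := ih _ hlt (hG.sub (hM.comp hP)) (dvd_sub hPG hPM)
  exact ⟨a + M, ha.add hM, by rw [add_comp, ← hGa, sub_add_cancel]⟩

end IsqLinearized

theorem isqLinearized_prod_X_sub_C_smul {F L : Type*} [Field F] [Fintype F] [Field L]
    [Algebra F L] (s : L) :
    IsqLinearized (Fintype.card F) (∏ c : F, (X - C (c • s))) := by
  rcases eq_or_ne s 0 with rfl | hs
  · simpa using IsqLinearized.X_pow (L := L) (q := Fintype.card F) 1
  have hscale : ∏ c : F, (X - C (c • s)) =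
      C (s ^ Fintype.card F) * (X ^ Fintype.card F - X : L[X]).comp (C s⁻¹ * X) := by
    rw [← Polynomial.map_X (algebraMap F L), ← Polynomial.map_pow, ← Polynomial.map_sub,
      ← FiniteField.prod_X_sub_C_eq_X_pow_card_sub_X, Polynomial.map_prod, prod_comp,
      C_pow, ← Finset.card_univ, ← Finset.prod_const, ← Finset.prod_mul_distrib]
    refine Finset.prod_congr rfl fun c _ => ?_
    simp only [Polynomial.map_sub, Polynomial.map_X, map_C, sub_comp, X_comp, C_comp,
      mul_sub, ← mul_assoc, ← Polynomial.C_mul, mul_inv_cancel₀ hs, C_1, one_mul,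
      Algebra.smul_def, mul_comm s]
  rw [hscale]
  refine IsqLinearized.C_mul _ (IsqLinearized.comp ?_ ?_)
  · simpa using (IsqLinearized.X_pow (L := L) (q := Fintype.card F) 1).sub
      (IsqLinearized.X_pow 0)
  · simpa using IsqLinearized.C_mul_X_pow (L := L) (q := Fintype.card F) s⁻¹ 0

theorem Submodule.prod_span_insert {F V M : Type*} [Field F] [Fintype F] [AddCommGroup V]
    [Module F V] [Finite V] [CommMonoid M] (φ : V → M) {W : Submodule F V} {t : V}
    (ht : t ∉ W) :
    ∏ x ∈ (span F (insert t (W : Set V)) : Set V).toFinite.toFinset, φ x =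
      ∏ c : F, ∏ w ∈ (W : Set V).toFinite.toFinset, φ (c • t + w) := by
  rw [← Finset.prod_product']
  symm
  refine Finset.prod_nbij (fun x => x.1 • t + x.2) ?_ ?_ ?_ fun _ _ => rfl
  · rintro ⟨c, w⟩ hx
    simp only [Finset.mem_product, Set.Finite.mem_toFinset, SetLike.mem_coe] at hx ⊢
    exact mem_span_insert.2 ⟨c, w, by rw [span_eq]; exact hx.2, rfl⟩
  · rintro ⟨c, w⟩ hx ⟨c', w'⟩ hx' h
    simp only [Finset.coe_product, Set.mem_prod, Set.Finite.mem_toFinset, SetLike.mem_coe]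
      at hx hx' h
    obtain rfl : c = c' := by
      by_contra hcc'
      refine ht ?_
      have : t = (c - c')⁻¹ • (w' - w) := by
        rw [eq_inv_smul_iff₀ (sub_ne_zero.2 hcc'), sub_smul]
        linear_combination (norm := module) h
      exact this ▸ W.smul_mem _ (W.sub_mem hx'.2 hx.2)
    simp_all
  · intro x hx
    simp only [Set.Finite.coe_toFinset, SetLike.mem_coe] at hx
    obtain ⟨c, w, hw, rfl⟩ := mem_span_insert.1 hx
    exact ⟨(c, w), by simpa [span_eq] using hw, rfl⟩

section Annihilator

variable {F L : Type*} [Field F] [Field L] [Finite L] [Algebra F L]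

noncomputable def qAnnihilator (U : Submodule F L) : L[X] :=
  ∏ u ∈ (U : Set L).toFinite.toFinset, (X - C u)

theorem qAnnihilator_monic (U : Submodule F L) : (qAnnihilator U).Monic :=
  monic_prod_of_monic _ _ fun u _ => monic_X_sub_C u

theorem eval_qAnnihilator_eq_zero_iff {U : Submodule F L} {x : L} :
    (qAnnihilator U).eval x = 0 ↔ x ∈ U := by
  simp [qAnnihilator, eval_prod, Finset.prod_eq_zero_iff, sub_eq_zero]

theorem qAnnihilator_dvd_of_forall_eval_eq_zero {U : Submodule F L} {G : L[X]}
    (hG : ∀ x ∈ U, G.eval x = 0) : qAnnihilator U ∣ G := by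
  rcases eq_or_ne G 0 with rfl | hG0
  · exact dvd_zero _
  rw [qAnnihilator, Finset.prod_eq_multiset_prod, Multiset.prod_X_sub_C_dvd_iff_le_roots hG0,
    Multiset.le_iff_subset (Finset.nodup _)]
  intro x hx
  rw [mem_roots hG0]
  exact hG x (by simpa using hx)

theorem qAnnihilator_bot : qAnnihilator (⊥ : Submodule F L) = X := by
  simp only [qAnnihilator, Submodule.bot_coe, Set.Finite.toFinset_zero]
  rw [← Finset.singleton_zero, Finset.prod_singleton, map_zero, sub_zero]

variable [Fintype F]

theorem qAnnihilator_span_insert {W : Submodule F L} {t : L} (ht : t ∉ W)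
    (hW : IsqLinearized (Fintype.card F) (qAnnihilator W)) :
    qAnnihilator (Submodule.span F (insert t (W : Set L))) =
      (∏ c : F, (X - C (c • (qAnnihilator W).eval t))).comp (qAnnihilator W) := by
  have hcoset : ∀ c : F, ∏ w ∈ (W : Set L).toFinite.toFinset, (X - C (c • t + w)) =
      (X - C (c • (qAnnihilator W).eval t)).comp (qAnnihilator W) := fun c => calc
    _ = (qAnnihilator W).comp (X - C (c • t)) := by
        rw [qAnnihilator, prod_comp]
        refine Finset.prod_congr rfl fun w _ => ?_
        rw [sub_comp, X_comp, C_comp, C_add]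
        ring
    _ = qAnnihilator W - C (c • (qAnnihilator W).eval t) := by
        rw [hW.comp_X_sub_C, hW.eval_smul]
    _ = _ := by rw [sub_comp, X_comp, C_comp]
  rw [qAnnihilator, Submodule.prod_span_insert _ ht, prod_comp]
  exact Finset.prod_congr rfl fun c _ => hcoset c

theorem isqLinearized_qAnnihilator (U : Submodule F L) :
    IsqLinearized (Fintype.card F) (qAnnihilator U) := by
  suffices ∀ s : Finset L,
      IsqLinearized (Fintype.card F) (qAnnihilator (Submodule.span F (s : Set L))) by
    simpa using this (U : Set L).toFinite.toFinset
  classical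
  intro s
  induction s using Finset.induction_on with
  | empty =>
    rw [Finset.coe_empty, Submodule.span_empty, qAnnihilator_bot]
    simpa using IsqLinearized.X_pow (L := L) 0
  | insert t s _ ih =>
    rw [Finset.coe_insert]
    by_cases ht : t ∈ Submodule.span F (s : Set L)
    · rwa [Submodule.span_insert_eq_span ht]
    · have hspan : Submodule.span F (insert t (s : Set L)) =
          Submodule.span F (insert t (Submodule.span F (s : Set L) : Set L)) := by
        rw [Submodule.span_insert, Submodule.span_insert, Submodule.span_span]
      rw [hspan, qAnnihilator_span_insert ht ih]
      exact (isqLinearized_prod_X_sub_C_smul _).comp ih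

end Annihilator

theorem interpolation_module_characterization_general
    (q : ℕ)
    (F L : Type*) [Field F] [Field L] [Fintype F] [Fintype L] [Algebra F L]
    (hcardF : Fintype.card F = q)
    (n : ℕ) (g r : Fin n → L)
    (Pi : L[X])
    (hPi : Pi = ∏ u ∈ ((Submodule.span F (Set.range g) : Set L)).toFinite.toFinset,
        (X - C u))
    (Λ : L[X]) (hΛlin : IsqLinearized q Λ)
    (hΛval : ∀ i, Λ.eval (g i) = r i)
    (f h : L[X]) (hf : IsqLinearized q f) (hh : IsqLinearized q h) :
    (∀ i, f.eval (g i) + h.eval (r i) = 0) ↔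
      ∃ a : L[X], IsqLinearized q a ∧ f = a.comp Pi - h.comp Λ := by
  subst hcardF
  set U := Submodule.span F (Set.range g)
  obtain rfl : Pi = qAnnihilator U := hPi
  constructor
  · intro hvan
    have hG : IsqLinearized (Fintype.card F) (f + h.comp Λ) := hf.add (hh.comp hΛlin)
    have hUker : U ≤ LinearMap.ker hG.toLinearMap := Submodule.span_le.2 <| by
      rintro _ ⟨i, rfl⟩
      simp [IsqLinearized.toLinearMap, eval_comp, hΛval, hvan]
    obtain ⟨a, ha, hGa⟩ := (isqLinearized_qAnnihilator U).exists_comp_eq_of_dvd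
      (qAnnihilator_monic U) hG (qAnnihilator_dvd_of_forall_eval_eq_zero fun x hx => hUker hx)
    exact ⟨a, ha, eq_sub_of_add_eq hGa⟩
  · rintro ⟨a, ha, rfl⟩ i
    have hgi : (qAnnihilator U).eval (g i) = 0 :=
      eval_qAnnihilator_eq_zero_iff.2 (Submodule.subset_span ⟨i, rfl⟩)
    rw [eval_sub, eval_comp, eval_comp, hgi, ha.eval_zero Fintype.card_ne_zero, hΛval]
    ring

/-- Characterization of the interpolation module: for `q`-linearized `f, h`, one has
`f(gᵢ) + h(rᵢ) = 0` for all `i` if and only if `f = a ∘ Π − h ∘ Λ` for some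
`q`-linearized `a`, where `Π` is the `q`-annihilator polynomial of `span(g₁,…,gₙ)` and
`Λ` is the `q`-Lagrange polynomial for the data. -/
theorem interpolation_module_characterization
    (q m : ℕ) (hq : IsPrimePow q) (hm : 0 < m)
    (F L : Type*) [Field F] [Field L] [Fintype F] [Fintype L] [Algebra F L]
    (hcardF : Fintype.card F = q) (hcardL : Fintype.card L = q ^ m)
    (n : ℕ) (hn : 0 < n) (g r : Fin n → L) (hg : LinearIndependent F g)
    (Pi : L[X])
    (hPi : Pi = ∏ u ∈ ((Submodule.span F (Set.range g) : Set L)).toFinite.toFinset,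
        (X - C u))
    (Λ : L[X]) (hΛlin : IsqLinearized q Λ) (hΛdeg : Λ.natDegree ≤ q ^ (n - 1))
    (hΛval : ∀ i, Λ.eval (g i) = r i)
    (f h : L[X]) (hf : IsqLinearized q f) (hh : IsqLinearized q h) :
    (∀ i, f.eval (g i) + h.eval (r i) = 0) ↔
      ∃ a : L[X], IsqLinearized q a ∧ f = a.comp Pi - h.comp Λ :=
  interpolation_module_characterization_general q F L hcardF n g r Pi hPi Λ hΛlin hΛval f h hf hh
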